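/- arXiv:0903.0503 — 3 statements merged into one kernel-verified Lean document; each statement's English description precedes it below -/
import Mathlib

section
/- Let T be an invertible measure-preserving transformation of a standard Borel probability space (X, ℬ, μ). Suppose that for every ε > 0 and all nonnegative f₁, f₂ ∈ L¹(X, μ) there exist s ≥ 1, integers n₁, …, n_s, nonnegative reals λ_{j,k} (j = 1, 2; 1 ≤ k ≤ s) and a nonnegative f ∈ L¹(X, μ) such that ‖f_j − ∑_{k=1}^{s} λ_{j,k} f∘T^{n_k}‖_{L¹} < ε for j = 1, 2. Then T is approximately transitive, i.e. the same approximation property holds for every finite family f₁, …, f_l of nonnegative L¹ functions, l ≥ 2. -/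
open MeasureTheory

/-- A (invertible) transformation `T` of `(X, μ)` is *approximately transitive* (AT) if for
every `ε > 0`, every `l ≥ 2` and all nonnegative integrable `f₁, …, f_l`, there are `s ≥ 1`,
integers `n₁, …, n_s`, nonnegative reals `λ_{j,k}` and a nonnegative integrable `f` such that
`‖f_j − ∑_k λ_{j,k} f∘T^{n_k}‖_{L¹} < ε` for all `j`. -/
def IsAT {X : Type*} [MeasurableSpace X] (μ : Measure X) (T : Equiv.Perm X) : Prop :=
  ∀ ε : ℝ, 0 < ε → ∀ l : ℕ, 2 ≤ l → ∀ f : Fin l → X → ℝ,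
    (∀ j, Integrable (f j) μ) → (∀ j x, 0 ≤ f j x) →
    ∃ s : ℕ, 1 ≤ s ∧ ∃ (n : Fin s → ℤ) (lam : Fin l → Fin s → ℝ) (g : X → ℝ),
      Integrable g μ ∧ (∀ x, 0 ≤ g x) ∧ (∀ j k, 0 ≤ lam j k) ∧
      ∀ j, ∫ x, |f j x - ∑ k, lam j k * g ((T ^ n k) x)| ∂μ < ε

/-!
Call `f` `ε`-close to the orbit cone of `g` if some nonnegative combination `∑ cₙ g ∘ Tⁿ` is
`ε`-close to `f` in `L¹`. Since `T` preserves `μ`, substituting into such a combination an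
approximation of `g` by the orbit cone of `h` costs at most `(∑ cₙ)` times its error, so closeness
to orbit cones is transitive up to a controlled loss. A finite family is then handled one member
at a time: approximate the current common approximant `g` together with the next member by a
single new `h`, accurately enough that all earlier members stay `ε`-close.
-/

open Filter Topology

section OrbitCombination

variable {X : Type*} {T : Equiv.Perm X}

variable (T) in
noncomputable def orbitCombination (g : X → ℝ) : (ℤ →₀ ℝ) →ₗ[ℝ] X → ℝ :=
  Finsupp.linearCombination ℝ fun n => g ∘ ⇑(T ^ n)

theorem orbitCombination_apply (g : X → ℝ) (c : ℤ →₀ ℝ) (x : X) :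
    orbitCombination T g c x = c.sum fun n a => a * g ((T ^ n) x) := by
  simp [orbitCombination, Finsupp.linearCombination_apply, Finsupp.sum]

theorem orbitCombination_sum_single {s : ℕ} (g : X → ℝ) (n : Fin s → ℤ) (a : Fin s → ℝ) (x : X) :
    orbitCombination T g (∑ k, Finsupp.single (n k) (a k)) x = ∑ k, a k * g ((T ^ n k) x) := by
  simp [orbitCombination, Finset.sum_apply]

theorem orbitCombination_comp_perm_zpow (h : X → ℝ) (d : ℤ →₀ ℝ) (n : ℤ) :
    orbitCombination T h d ∘ ⇑(T ^ n) = orbitCombination T h (d.mapDomain (· + n)) := by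
  calc orbitCombination T h d ∘ ⇑(T ^ n)
      = LinearMap.funLeft ℝ ℝ (T ^ n) (orbitCombination T h d) := rfl
    _ = _ := by
      rw [orbitCombination, Finsupp.apply_linearCombination, Finsupp.linearCombination_mapDomain]
      congr 1
      ext m x
      simp [LinearMap.funLeft, zpow_add]

theorem orbitCombination_orbitCombination (h : X → ℝ) (c d : ℤ →₀ ℝ) :
    orbitCombination T (orbitCombination T h d) c =
      orbitCombination T h (c.sum fun n a => a • d.mapDomain (· + n)) := by
  rw [map_finsuppSum]
  simp_rw [map_smul, ← orbitCombination_comp_perm_zpow]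
  rfl

theorem abs_orbitCombination_sub_le {c : ℤ →₀ ℝ} (hc : 0 ≤ c) (u w : X → ℝ) (x : X) :
    |orbitCombination T u c x - orbitCombination T w c x| ≤
      orbitCombination T (fun y => |u y - w y|) c x := by
  simp only [orbitCombination_apply, Finsupp.sum, ← Finset.sum_sub_distrib, ← mul_sub]
  refine (Finset.abs_sum_le_sum_abs _ _).trans_eq (Finset.sum_congr rfl fun n _ => ?_)
  rw [abs_mul, abs_of_nonneg (hc n)]

end OrbitCombination

section OrbitCone

variable {X : Type*} [MeasurableSpace X] {μ : Measure X} {T : Equiv.Perm X}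

theorem measurePreserving_perm_zpow (hT : MeasurePreserving T μ μ)
    (hT' : MeasurePreserving T.symm μ μ) : ∀ n : ℤ, MeasurePreserving (⇑(T ^ n)) μ μ
  | (n : ℕ) => by simpa [Equiv.Perm.coe_pow] using hT.iterate n
  | .negSucc n => by
    simpa only [zpow_negSucc, ← inv_pow, Equiv.Perm.coe_pow, Equiv.Perm.inv_def]
      using hT'.iterate (n + 1)

theorem measurableEmbedding_perm_zpow (hT : ∀ n : ℤ, Measurable (T ^ n)) (n : ℤ) :
    MeasurableEmbedding (T ^ n) :=
  (MeasurableEquiv.mk (T ^ n) (hT n)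
    (by simpa [← Equiv.Perm.inv_def, ← zpow_neg] using hT (-n))).measurableEmbedding

theorem integral_comp_perm_zpow (hT : ∀ n : ℤ, MeasurePreserving (⇑(T ^ n)) μ μ) (n : ℤ)
    (φ : X → ℝ) : ∫ x, φ ((T ^ n) x) ∂μ = ∫ x, φ x ∂μ :=
  (hT n).integral_comp (measurableEmbedding_perm_zpow (fun n => (hT n).measurable) n) φ

theorem MeasureTheory.Integrable.comp_perm_zpow
    (hT : ∀ n : ℤ, MeasurePreserving (⇑(T ^ n)) μ μ) {φ : X → ℝ} (hφ : Integrable φ μ)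
    (n : ℤ) : Integrable (fun x => φ ((T ^ n) x)) μ :=
  ((hT n).integrable_comp_emb (measurableEmbedding_perm_zpow (fun n => (hT n).measurable) n)).2 hφ

theorem integrable_orbitCombination (hT : ∀ n : ℤ, MeasurePreserving (⇑(T ^ n)) μ μ)
    {g : X → ℝ} (hg : Integrable g μ) (c : ℤ →₀ ℝ) : Integrable (orbitCombination T g c) μ := by
  rw [orbitCombination, Finsupp.linearCombination_apply]
  exact integrable_finsetSum' _ fun n _ => (hg.comp_perm_zpow hT n).smul (c n)

theorem integral_orbitCombination (hT : ∀ n : ℤ, MeasurePreserving (⇑(T ^ n)) μ μ)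
    {g : X → ℝ} (hg : Integrable g μ) (c : ℤ →₀ ℝ) :
    ∫ x, orbitCombination T g c x ∂μ = c.degree * ∫ x, g x ∂μ := by
  simp_rw [orbitCombination_apply, Finsupp.sum]
  rw [integral_finsetSum _ fun n _ => (hg.comp_perm_zpow hT n).const_mul (c n)]
  simp_rw [integral_const_mul, integral_comp_perm_zpow hT, Finsupp.degree_apply, Finset.sum_mul]

theorem integral_abs_orbitCombination_sub_le (hT : ∀ n : ℤ, MeasurePreserving (⇑(T ^ n)) μ μ)
    {c : ℤ →₀ ℝ} (hc : 0 ≤ c) {u w : X → ℝ} (hu : Integrable u μ) (hw : Integrable w μ) :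
    ∫ x, |orbitCombination T u c x - orbitCombination T w c x| ∂μ ≤
      c.degree * ∫ x, |u x - w x| ∂μ := by
  rw [← integral_orbitCombination hT (g := fun x => |u x - w x|) (hu.sub hw).abs]
  exact integral_mono
    ((integrable_orbitCombination hT hu c).sub (integrable_orbitCombination hT hw c)).abs
    (integrable_orbitCombination hT (hu.sub hw).abs c) (abs_orbitCombination_sub_le hc u w)

theorem integral_abs_sub_orbitCombination_orbitCombination_le
    (hT : ∀ n : ℤ, MeasurePreserving (⇑(T ^ n)) μ μ) {f g h : X → ℝ} (hf : Integrable f μ)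
    (hg : Integrable g μ) (hh : Integrable h μ) {c : ℤ →₀ ℝ} (hc : 0 ≤ c) (d : ℤ →₀ ℝ) :
    ∫ x, |f x - orbitCombination T (orbitCombination T h d) c x| ∂μ ≤
      ∫ x, |f x - orbitCombination T g c x| ∂μ +
        c.degree * ∫ x, |g x - orbitCombination T h d x| ∂μ := by
  have hA := integrable_orbitCombination hT hg c
  have hB := integrable_orbitCombination hT (integrable_orbitCombination hT hh d) c
  calc ∫ x, |f x - orbitCombination T (orbitCombination T h d) c x| ∂μ
      ≤ ∫ x, |f x - orbitCombination T g c x| ∂μ +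
          ∫ x, |orbitCombination T g c x - orbitCombination T (orbitCombination T h d) c x| ∂μ := by
        refine (integral_mono (hf.sub hB).abs ((hf.sub hA).abs.add (hA.sub hB).abs)
          fun x => abs_sub_le _ _ _).trans_eq ?_
        exact integral_add (hf.sub hA).abs (hA.sub hB).abs
    _ ≤ _ := by
        gcongr
        exact integral_abs_orbitCombination_sub_le hT hc hg (integrable_orbitCombination hT hh d)

variable (μ T) in
def NearOrbitCone (ε : ℝ) (g f : X → ℝ) : Prop :=
  ∃ c : ℤ →₀ ℝ, 0 ≤ c ∧ ∫ x, |f x - orbitCombination T g c x| ∂μ < ε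

theorem NearOrbitCone.of_sum_fin {ε : ℝ} {g f : X → ℝ} {s : ℕ} {n : Fin s → ℤ} {a : Fin s → ℝ}
    (ha : ∀ k, 0 ≤ a k) (hf : ∫ x, |f x - ∑ k, a k * g ((T ^ n k) x)| ∂μ < ε) :
    NearOrbitCone μ T ε g f :=
  ⟨∑ k, Finsupp.single (n k) (a k), Finset.sum_nonneg fun k _ => Finsupp.single_nonneg.2 (ha k),
    by simpa only [orbitCombination_sum_single] using hf⟩

theorem NearOrbitCone.eventually_trans (hT : ∀ n : ℤ, MeasurePreserving (⇑(T ^ n)) μ μ)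
    {ε : ℝ} {f g : X → ℝ} (hf : Integrable f μ) (hg : Integrable g μ)
    (hfg : NearOrbitCone μ T ε g f) :
    ∀ᶠ δ in 𝓝[>] 0, ∀ h, Integrable h μ → NearOrbitCone μ T δ h g → NearOrbitCone μ T ε h f := by
  obtain ⟨c, hc, hfc⟩ := hfg
  set r := ∫ x, |f x - orbitCombination T g c x| ∂μ
  have hdeg : 0 ≤ c.degree := Finset.sum_nonneg fun n _ => hc n
  have hpos : 0 < (ε - r) / (c.degree + 1) := div_pos (by linarith) (by linarith)
  filter_upwards [eventually_nhdsWithin_of_eventually_nhds (eventually_lt_nhds hpos)]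
    with δ hδ h hh ⟨d, hd, hgd⟩
  refine ⟨c.sum fun n a => a • d.mapDomain (· + n),
    Finset.sum_nonneg fun n _ => smul_nonneg (hc n) (Finsupp.mapDomain_nonneg hd), ?_⟩
  rw [← orbitCombination_orbitCombination]
  have hδ' : δ * (c.degree + 1) < ε - r := (lt_div_iff₀ (by linarith)).1 hδ
  have hgd0 : 0 ≤ ∫ x, |g x - orbitCombination T h d x| ∂μ := integral_nonneg fun _ => abs_nonneg _
  calc _ ≤ r + c.degree * ∫ x, |g x - orbitCombination T h d x| ∂μ :=
        integral_abs_sub_orbitCombination_orbitCombination_le hT hf hg hh hc d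
    _ < ε := by nlinarith

theorem NearOrbitCone.mono {δ ε : ℝ} {g f : X → ℝ} (h : NearOrbitCone μ T δ g f) (hδε : δ ≤ ε) :
    NearOrbitCone μ T ε g f :=
  let ⟨c, hc, hfc⟩ := h; ⟨c, hc, hfc.trans_le hδε⟩

theorem exists_forall_mem_nearOrbitCone (hT : ∀ n : ℤ, MeasurePreserving (⇑(T ^ n)) μ μ)
    (H : ∀ δ : ℝ, 0 < δ → ∀ f₁ f₂ : X → ℝ, Integrable f₁ μ → Integrable f₂ μ → 0 ≤ f₁ → 0 ≤ f₂ →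
      ∃ g, Integrable g μ ∧ 0 ≤ g ∧ NearOrbitCone μ T δ g f₁ ∧ NearOrbitCone μ T δ g f₂)
    {ι : Type*} {f : ι → X → ℝ} (hf : ∀ j, Integrable (f j) μ) (hf0 : ∀ j, 0 ≤ f j)
    {ε : ℝ} (hε : 0 < ε) (S : Finset ι) :
    ∃ g, Integrable g μ ∧ 0 ≤ g ∧ ∀ j ∈ S, NearOrbitCone μ T ε g (f j) := by
  classical
  induction S using Finset.induction_on with
  | empty => exact ⟨0, integrable_zero _ _ _, le_rfl, by simp⟩
  | insert i S _ ih =>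
    obtain ⟨g, hg, hg0, hgS⟩ := ih
    have hδ : ∀ᶠ δ in 𝓝[>] 0, (0 < δ ∧ δ ≤ ε) ∧ ∀ j ∈ S, ∀ h, Integrable h μ →
        NearOrbitCone μ T δ h g → NearOrbitCone μ T ε h (f j) :=
      (eventually_mem_nhdsWithin.and
          (eventually_nhdsWithin_of_eventually_nhds (eventually_le_nhds hε))).and
        ((eventually_all_finset S).2 fun j hj => (hgS j hj).eventually_trans hT (hf j) hg)
    obtain ⟨δ, ⟨hδ0, hδε⟩, hδS⟩ := hδ.exists
    obtain ⟨h, hh, hh0, hgh, hfh⟩ := H δ hδ0 g (f i) hg (hf i) hg0 (hf0 i)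
    exact ⟨h, hh, hh0,
      (Finset.forall_mem_insert _ _ _).2 ⟨hfh.mono hδε, fun j hj => hδS j hj h hh hgh⟩⟩

theorem exists_fin_of_forall_nearOrbitCone {ι : Type*} [Fintype ι] {ε : ℝ} {g : X → ℝ}
    {f : ι → X → ℝ} (hf : ∀ j, NearOrbitCone μ T ε g (f j)) :
    ∃ s : ℕ, 1 ≤ s ∧ ∃ (n : Fin s → ℤ) (lam : ι → Fin s → ℝ), (∀ j k, 0 ≤ lam j k) ∧
      ∀ j, ∫ x, |f j x - ∑ k, lam j k * g ((T ^ n k) x)| ∂μ < ε := by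
  classical
  choose c hc0 hc using hf
  -- `0` is thrown in only to make the common index set nonempty
  set S := insert 0 (Finset.univ.biUnion fun j => (c j).support)
  have hsum (j : ι) (x : X) : ∑ k, c j (S.equivFin.symm k) * g ((T ^ (S.equivFin.symm k : ℤ)) x) =
      orbitCombination T g (c j) x := by
    rw [orbitCombination_apply, Finsupp.sum_of_support_subset (c j)
      (fun m hm => Finset.mem_insert_of_mem (Finset.mem_biUnion.2 ⟨j, Finset.mem_univ j, hm⟩ :
        m ∈ Finset.univ.biUnion fun j => (c j).support))
      (fun m a => a * g ((T ^ m) x)) fun _ _ => zero_mul _, ← Finset.sum_coe_sort S]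
    exact Equiv.sum_comp S.equivFin.symm fun m : S => c j m * g ((T ^ (m : ℤ)) x)
  refine ⟨S.card, Finset.card_pos.2 ⟨0, Finset.mem_insert_self _ _⟩, fun k => S.equivFin.symm k,
    fun j k => c j (S.equivFin.symm k), fun j k => hc0 j _, fun j => ?_⟩
  simpa only [hsum] using hc j

end OrbitCone

theorem stmt0_general {X : Type*} [MeasurableSpace X] (μ : Measure X)
    (T : Equiv.Perm X) (hT : MeasurePreserving T μ μ)
    (hTsymm : MeasurePreserving T.symm μ μ)
    (H : ∀ ε : ℝ, 0 < ε → ∀ f₁ f₂ : X → ℝ,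
      Integrable f₁ μ → Integrable f₂ μ → (∀ x, 0 ≤ f₁ x) → (∀ x, 0 ≤ f₂ x) →
      ∃ s : ℕ, 1 ≤ s ∧ ∃ (n : Fin s → ℤ) (lam₁ lam₂ : Fin s → ℝ) (g : X → ℝ),
        Integrable g μ ∧ (∀ x, 0 ≤ g x) ∧ (∀ k, 0 ≤ lam₁ k) ∧ (∀ k, 0 ≤ lam₂ k) ∧
        (∫ x, |f₁ x - ∑ k, lam₁ k * g ((T ^ n k) x)| ∂μ < ε) ∧
        (∫ x, |f₂ x - ∑ k, lam₂ k * g ((T ^ n k) x)| ∂μ < ε)) :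
    IsAT μ T := by
  intro ε hε l _ f hf hf0
  have hTz := measurePreserving_perm_zpow hT hTsymm
  have Hcone : ∀ δ : ℝ, 0 < δ → ∀ f₁ f₂ : X → ℝ, Integrable f₁ μ → Integrable f₂ μ →
      0 ≤ f₁ → 0 ≤ f₂ →
      ∃ g, Integrable g μ ∧ 0 ≤ g ∧ NearOrbitCone μ T δ g f₁ ∧ NearOrbitCone μ T δ g f₂ := by
    intro δ hδ f₁ f₂ hf₁ hf₂ hf₁0 hf₂0
    obtain ⟨_, -, n, lam₁, lam₂, g, hg, hg0, hlam₁, hlam₂, h₁, h₂⟩ :=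
      H δ hδ f₁ f₂ hf₁ hf₂ hf₁0 hf₂0
    exact ⟨g, hg, hg0, .of_sum_fin hlam₁ h₁, .of_sum_fin hlam₂ h₂⟩
  obtain ⟨g, hg, hg0, hfg⟩ :=
    exists_forall_mem_nearOrbitCone hTz Hcone hf (fun j => hf0 j) hε Finset.univ
  obtain ⟨s, hs, n, lam, hlam, hfin⟩ :=
    exists_fin_of_forall_nearOrbitCone fun j => hfg j (Finset.mem_univ j)
  exact ⟨s, hs, n, lam, g, hg, hg0, hlam, hfin⟩

/-- If the approximation property defining approximate transitivity holds for every pair of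
nonnegative `L¹` functions, then it holds for every finite family, i.e. `T` is AT. -/
theorem stmt0 {X : Type*} [MeasurableSpace X] [StandardBorelSpace X] (μ : Measure X) [IsProbabilityMeasure μ]
    (T : Equiv.Perm X) (hT : MeasurePreserving T μ μ)
    (hTsymm : MeasurePreserving T.symm μ μ)
    (H : ∀ ε : ℝ, 0 < ε → ∀ f₁ f₂ : X → ℝ,
      Integrable f₁ μ → Integrable f₂ μ → (∀ x, 0 ≤ f₁ x) → (∀ x, 0 ≤ f₂ x) →
      ∃ s : ℕ, 1 ≤ s ∧ ∃ (n : Fin s → ℤ) (lam₁ lam₂ : Fin s → ℝ) (g : X → ℝ),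
        Integrable g μ ∧ (∀ x, 0 ≤ g x) ∧ (∀ k, 0 ≤ lam₁ k) ∧ (∀ k, 0 ≤ lam₂ k) ∧
        (∫ x, |f₁ x - ∑ k, lam₁ k * g ((T ^ n k) x)| ∂μ < ε) ∧
        (∫ x, |f₂ x - ∑ k, lam₂ k * g ((T ^ n k) x)| ∂μ < ε)) :
    IsAT μ T :=
  stmt0_general μ T hT hTsymm H
end

section
/- A Borel probability measure μ on the unit circle is a Rajchman measure if and only if for every strictly increasing sequence (n_k)_{k≥1} of positive integers one has ∫ |(1/k) ∑_{j=1}^{k} z^{n_j}|² dμ(z) → 0 as k → ∞. -/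
/-!
Expanding the square, `∫ |k⁻¹ ∑_{j<k} z^{n_j}|² dμ = k⁻² ∑_{i,j<k} μ̂(n_i - n_j)`. If `μ̂ → 0`,
then in each row of this double sum all but a bounded number of terms are small, because
`j ↦ n_i - n_j` is injective; so the average tends to `0`. Conversely, Jensen gives
`|k⁻¹ ∑_{j<k} μ̂(n_j)|² ≤ ∫ |k⁻¹ ∑_{j<k} z^{n_j}|² dμ`, so every subsequence of `(μ̂(m))_{m ≥ 1}`
has Cesàro means tending to `0`. A bounded sequence with this property tends to `0`: otherwise a
subsequence would converge to some `c ≠ 0`, and so would its Cesàro means. Negative frequencies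
follow from `μ̂(-m) = conj μ̂(m)`.
-/

open MeasureTheory Filter Topology Finset ComplexConjugate

noncomputable instance : MeasurableSpace Circle := borel Circle
instance : BorelSpace Circle := ⟨rfl⟩

/-- A finite Borel measure on the unit circle is *Rajchman* if its Fourier coefficients
`μ̂(n) = ∫ zⁿ dμ(z)` tend to `0` as `|n| → ∞`. -/
def IsRajchman (μ : Measure Circle) : Prop :=
  Tendsto (fun n : ℤ => ∫ z, (z : ℂ) ^ n ∂μ) cofinite (nhds 0)

lemma sum_comp_injective_le {ι : Type*} {f : ι → ℤ} (hf : Function.Injective f) {a : ℤ → ℝ}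
    {C ε : ℝ} (hC : ∀ m, a m ≤ C) (hC0 : 0 ≤ C) (T : Finset ℤ) (hT : ∀ m ∉ T, a m ≤ ε)
    (hε : 0 ≤ ε) (s : Finset ι) :
    ∑ j ∈ s, a (f j) ≤ C * #T + #s * ε := by
  classical
  rw [← sum_filter_add_sum_filter_not s (fun j => f j ∈ T) (fun j => a (f j))]
  gcongr
  · calc ∑ j ∈ s with f j ∈ T, a (f j) ≤ #{j ∈ s | f j ∈ T} * C := by
          simpa using sum_le_card_nsmul _ _ C fun j _ => hC (f j)
      _ ≤ C * #T := by
          rw [mul_comm]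
          gcongr
          exact card_le_card_of_injOn f (fun j hj => (mem_filter.1 (mem_coe.1 hj)).2) hf.injOn
  · calc ∑ j ∈ s with f j ∉ T, a (f j) ≤ #{j ∈ s | f j ∉ T} * ε := by
          simpa using sum_le_card_nsmul _ _ ε fun j hj => hT _ (mem_filter.1 hj).2
      _ ≤ #s * ε := by gcongr; exact filter_subset _ s

lemma tendsto_inv_sq_mul_sum_sum_sub {n : ℕ → ℤ} (hn : Function.Injective n) {a : ℤ → ℝ}
    (h0 : ∀ m, 0 ≤ a m) {C : ℝ} (hC : ∀ m, a m ≤ C) (ha : Tendsto a cofinite (𝓝 0)) :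
    Tendsto (fun k : ℕ => (k : ℝ)⁻¹ ^ 2 * ∑ i ∈ range k, ∑ j ∈ range k, a (n i - n j))
      atTop (𝓝 0) := by
  have hC0 : 0 ≤ C := (h0 0).trans (hC 0)
  refine tendsto_order.2 ⟨fun b hb => Eventually.of_forall fun k => hb.trans_le <|
      mul_nonneg (by positivity) (sum_nonneg fun i _ => sum_nonneg fun j _ => h0 _),
    fun b hb => ?_⟩
  obtain ⟨T, hT⟩ : ∃ T : Finset ℤ, ∀ m ∉ T, a m ≤ b / 2 := by
    have hfin := eventually_cofinite.1 (ha.eventually (ge_mem_nhds (half_pos hb)))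
    exact ⟨hfin.toFinset, fun m hm => by simpa using hm⟩
  have hbound : ∀ k : ℕ, (k : ℝ)⁻¹ ^ 2 * ∑ i ∈ range k, ∑ j ∈ range k, a (n i - n j)
      ≤ C * #T / k + b / 2 := by
    intro k
    rcases Nat.eq_zero_or_pos k with rfl | hk
    · simp; positivity
    have hrow : ∀ i, ∑ j ∈ range k, a (n i - n j) ≤ C * #T + k * (b / 2) := fun i => by
      simpa using sum_comp_injective_le (f := fun j => n i - n j)
        (fun j₁ j₂ h => hn (by simpa using h)) hC hC0 T hT (by positivity) (range k)
    calc (k : ℝ)⁻¹ ^ 2 * ∑ i ∈ range k, ∑ j ∈ range k, a (n i - n j)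
        ≤ (k : ℝ)⁻¹ ^ 2 * (k * (C * #T + k * (b / 2))) := by
          gcongr
          exact (sum_le_card_nsmul _ _ _ fun i _ => hrow i).trans_eq (by simp [mul_add])
      _ = C * #T / k + b / 2 := by field_simp
  have hlim : Tendsto (fun k : ℕ => C * #T / k + b / 2) atTop (𝓝 (0 + b / 2)) :=
    (tendsto_const_div_atTop_nhds_zero_nat _).add_const _
  filter_upwards [hlim.eventually (gt_mem_nhds (show 0 + b / 2 < b by linarith))] with k hk
  exact (hbound k).trans_lt hk

lemma norm_integral_sq_le_integral_norm_sq {α E : Type*} [MeasurableSpace α] {μ : Measure α}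
    [IsProbabilityMeasure μ] [NormedAddCommGroup E] [NormedSpace ℝ E] [CompleteSpace E]
    {f : α → E} (hf : Integrable f μ) (hf2 : Integrable (fun x => ‖f x‖ ^ 2) μ) :
    ‖∫ x, f x ∂μ‖ ^ 2 ≤ ∫ x, ‖f x‖ ^ 2 ∂μ :=
  ((convexOn_norm convex_univ).pow (fun _ _ => norm_nonneg _) 2).map_integral_le
    (by fun_prop) isClosed_univ (by simp) hf hf2

lemma tendsto_zero_of_forall_cesaro_comp_tendsto_zero {E : Type*} [NormedAddCommGroup E]
    [NormedSpace ℝ E] [ProperSpace E] {a : ℕ → E} (ha : Bornology.IsBounded (Set.range a))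
    (h : ∀ φ : ℕ → ℕ, StrictMono φ →
      Tendsto (fun k : ℕ => (k : ℝ)⁻¹ • ∑ j ∈ range k, a (φ j)) atTop (𝓝 0)) :
    Tendsto a atTop (𝓝 0) := by
  by_contra hnot
  obtain ⟨ε, hε, hfreq⟩ : ∃ ε > 0, ∃ᶠ m in atTop, a m ∉ Metric.ball 0 ε := by
    obtain ⟨s, hs, hfreq⟩ := not_tendsto_iff_exists_frequently_notMem.1 hnot
    obtain ⟨ε, hε, hball⟩ := Metric.mem_nhds_iff.1 hs
    exact ⟨ε, hε, hfreq.mono fun m hm hmε => hm (hball hmε)⟩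
  obtain ⟨φ, hφ, hφε⟩ := extraction_of_frequently_atTop hfreq
  obtain ⟨c, -, ψ, hψ, hc⟩ := tendsto_subseq_of_bounded ha fun k => Set.mem_range_self (φ k)
  have hc0 : c = 0 := tendsto_nhds_unique hc.cesaro_smul (h (φ ∘ ψ) (hφ.comp hψ))
  have hcε : c ∉ Metric.ball 0 ε :=
    Metric.isOpen_ball.isClosed_compl.mem_of_tendsto hc (Eventually.of_forall fun k => hφε (ψ k))
  exact hcε (hc0 ▸ Metric.mem_ball_self hε)

noncomputable def circleFourierCoeff (μ : Measure Circle) (n : ℤ) : ℂ :=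
  ∫ z, (z : ℂ) ^ n ∂μ

lemma Circle.continuous_coe_zpow (n : ℤ) : Continuous fun z : Circle => (z : ℂ) ^ n :=
  continuous_subtype_val.zpow₀ n fun z => Or.inl (Circle.coe_ne_zero z)

lemma Circle.norm_coe_zpow (z : Circle) (n : ℤ) : ‖(z : ℂ) ^ n‖ = 1 := by
  simp [norm_zpow, Circle.norm_coe]

lemma Circle.conj_coe_zpow (z : Circle) (n : ℤ) : conj ((z : ℂ) ^ n) = (z : ℂ) ^ (-n) := by
  rw [map_zpow₀, ← Circle.coe_inv_eq_conj, Circle.coe_inv, inv_zpow, zpow_neg]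

section
variable (μ : Measure Circle)

lemma circleFourierCoeff_neg (n : ℤ) :
    circleFourierCoeff μ (-n) = conj (circleFourierCoeff μ n) := by
  simp only [circleFourierCoeff, ← integral_conj, Circle.conj_coe_zpow]

lemma IsRajchman.of_tendsto_natCast
    (h : Tendsto (fun n : ℕ => circleFourierCoeff μ n) atTop (𝓝 0)) : IsRajchman μ := by
  have hTop : Tendsto (circleFourierCoeff μ) atTop (𝓝 0) := by
    rwa [← Nat.map_cast_int_atTop, tendsto_map'_iff]
  have hBot : Tendsto (circleFourierCoeff μ) atBot (𝓝 0) := by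
    have := ((Complex.continuous_conj.tendsto 0).comp hTop).comp tendsto_neg_atBot_atTop
    simpa [Function.comp_def, ← circleFourierCoeff_neg] using this
  rw [IsRajchman, Int.cofinite_eq, tendsto_sup]
  exact ⟨hBot, hTop⟩

variable [IsFiniteMeasure μ]

lemma Circle.integrable_coe_zpow (n : ℤ) : Integrable (fun z : Circle => (z : ℂ) ^ n) μ :=
  (Circle.continuous_coe_zpow n).integrable_of_hasCompactSupport (.of_compactSpace _)

lemma integral_norm_sum_coe_zpow_sq {ι : Type*} (s : Finset ι) (m : ι → ℤ) :
    ((∫ z, ‖∑ j ∈ s, (z : ℂ) ^ m j‖ ^ 2 ∂μ : ℝ) : ℂ)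
      = ∑ i ∈ s, ∑ j ∈ s, circleFourierCoeff μ (m i - m j) := by
  have hexpand : ∀ z : Circle, ((‖∑ j ∈ s, (z : ℂ) ^ m j‖ ^ 2 : ℝ) : ℂ)
      = ∑ i ∈ s, ∑ j ∈ s, (z : ℂ) ^ (m i - m j) := fun z => by
    rw [Complex.ofReal_pow, ← Complex.mul_conj', map_sum, sum_mul_sum]
    refine sum_congr rfl fun i _ => sum_congr rfl fun j _ => ?_
    rw [Circle.conj_coe_zpow, ← zpow_add₀ (Circle.coe_ne_zero z), sub_eq_add_neg]
  rw [← integral_complex_ofReal]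
  simp only [hexpand, circleFourierCoeff]
  have hint := Circle.integrable_coe_zpow μ
  rw [integral_finsetSum _ fun i _ => integrable_finsetSum _ fun j _ => hint _]
  exact sum_congr rfl fun i _ => integral_finsetSum _ fun j _ => hint _

lemma integral_norm_sum_coe_zpow_sq_le {ι : Type*} (s : Finset ι) (m : ι → ℤ) :
    ∫ z, ‖∑ j ∈ s, (z : ℂ) ^ m j‖ ^ 2 ∂μ
      ≤ ∑ i ∈ s, ∑ j ∈ s, ‖circleFourierCoeff μ (m i - m j)‖ := by
  calc ∫ z, ‖∑ j ∈ s, (z : ℂ) ^ m j‖ ^ 2 ∂μ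
      = ‖((∫ z, ‖∑ j ∈ s, (z : ℂ) ^ m j‖ ^ 2 ∂μ : ℝ) : ℂ)‖ :=
        (Complex.norm_of_nonneg (integral_nonneg fun z => by positivity)).symm
    _ ≤ _ := by
        rw [integral_norm_sum_coe_zpow_sq]
        exact (norm_sum_le _ _).trans (sum_le_sum fun i _ => norm_sum_le _ _)

lemma integral_norm_cesaro_sq_le (n : ℕ → ℕ) (k : ℕ) :
    ∫ z, ‖(k : ℂ)⁻¹ * ∑ j ∈ range k, (z : ℂ) ^ n j‖ ^ 2 ∂μ
      ≤ (k : ℝ)⁻¹ ^ 2 * ∑ i ∈ range k, ∑ j ∈ range k,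
          ‖circleFourierCoeff μ ((n i : ℤ) - n j)‖ := by
  simp only [norm_mul, mul_pow, norm_inv, Complex.norm_natCast]
  rw [integral_const_mul]
  gcongr
  simpa using integral_norm_sum_coe_zpow_sq_le μ (range k) fun j => (n j : ℤ)

end

section
variable (μ : Measure Circle) [IsProbabilityMeasure μ]

lemma norm_circleFourierCoeff_le_one (n : ℤ) : ‖circleFourierCoeff μ n‖ ≤ 1 :=
  (norm_integral_le_integral_norm _).trans_eq (by simp only [Circle.norm_coe_zpow]; simp)

lemma norm_cesaro_circleFourierCoeff_sq_le (n : ℕ → ℕ) (k : ℕ) :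
    ‖(k : ℝ)⁻¹ • ∑ j ∈ range k, circleFourierCoeff μ (n j)‖ ^ 2
      ≤ ∫ z, ‖(k : ℂ)⁻¹ * ∑ j ∈ range k, (z : ℂ) ^ n j‖ ^ 2 ∂μ := by
  have hcont : Continuous fun z : Circle => (k : ℂ)⁻¹ * ∑ j ∈ range k, (z : ℂ) ^ n j := by
    fun_prop
  have hmean : (k : ℝ)⁻¹ • ∑ j ∈ range k, circleFourierCoeff μ (n j)
      = ∫ z, (k : ℂ)⁻¹ * ∑ j ∈ range k, (z : ℂ) ^ n j ∂μ := by
    rw [integral_const_mul, integral_finsetSum _ fun j _ => by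
      simpa using Circle.integrable_coe_zpow μ (n j)]
    simp [circleFourierCoeff, Complex.real_smul]
  rw [hmean]
  exact norm_integral_sq_le_integral_norm_sq
    (hcont.integrable_of_hasCompactSupport (.of_compactSpace _))
    ((hcont.norm.pow 2).integrable_of_hasCompactSupport (.of_compactSpace _))

end

/-- Blum–Hanson: a Borel probability measure `μ` on the unit circle is Rajchman iff for every
strictly increasing sequence `(n_k)` of positive integers,
`∫ |(1/k) ∑_{j=1}^k z^{n_j}|² dμ(z) → 0` as `k → ∞`. -/
theorem stmt2 (μ : Measure Circle) [IsProbabilityMeasure μ] :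
    IsRajchman μ ↔
      ∀ n : ℕ → ℕ, StrictMono n → (∀ k, 0 < n k) →
        Tendsto
          (fun k : ℕ => ∫ z, ‖(k : ℂ)⁻¹ * ∑ j ∈ Finset.range k, (z : ℂ) ^ (n j)‖ ^ 2 ∂μ)
          atTop (nhds 0) := by
  constructor
  · intro hμ n hn _
    have hcoeff : Tendsto (fun m => ‖circleFourierCoeff μ m‖) cofinite (𝓝 0) :=
      tendsto_zero_iff_norm_tendsto_zero.1 hμ
    have hdouble := tendsto_inv_sq_mul_sum_sum_sub (n := fun j => (n j : ℤ))
      (Nat.cast_injective.comp hn.injective) (fun _ => norm_nonneg _)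
      (norm_circleFourierCoeff_le_one μ) hcoeff
    exact squeeze_zero (fun k => integral_nonneg fun z => by positivity)
      (integral_norm_cesaro_sq_le μ n) hdouble
  · intro H
    apply IsRajchman.of_tendsto_natCast
    rw [← tendsto_add_atTop_iff_nat 1]
    have hbdd : Bornology.IsBounded (Set.range fun m : ℕ => circleFourierCoeff μ ↑(m + 1)) :=
      Metric.isBounded_closedBall.subset <| Set.range_subset_iff.2 fun m =>
        mem_closedBall_zero_iff.2 (norm_circleFourierCoeff_le_one μ _)
    refine tendsto_zero_of_forall_cesaro_comp_tendsto_zero hbdd fun φ hφ => ?_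
    have hsq := squeeze_zero (fun k => by positivity)
      (norm_cesaro_circleFourierCoeff_sq_le μ (fun j => φ j + 1))
      (H _ (hφ.add_const 1) fun _ => Nat.succ_pos _)
    refine tendsto_zero_iff_norm_tendsto_zero.2 ?_
    simpa only [Function.comp_def, Real.sqrt_sq (norm_nonneg _), Real.sqrt_zero] using
      (Real.continuous_sqrt.tendsto 0).comp hsq
end

section
/- Let T be an invertible measure-preserving transformation of a probability space (X, ℬ, μ) and φ : X → ℝ/ℤ measurable. On X × (ℝ/ℤ) × (ℝ/ℤ), equipped with μ ⊗ λ ⊗ λ where λ is Lebesgue (Haar) measure on ℝ/ℤ, define T̄(x, y, z) = (Tx, y + φ(x), z + y), and let F(x, y, z) = χ_{[0,1/2)}(z) − χ_{[1/2,1)}(z) (identifying ℝ/ℤ with [0,1)). Then ∫ F∘T̄ⁿ · F d(μ⊗λ⊗λ) = 0 for every integer n ≠ 0; that is, the spectral measure of F with respect to T̄ is exactly Lebesgue measure on the circle. -/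
open MeasureTheory

/-- The 2-step group extension `T̄(x, y, z) = (Tx, y + φ(x), z + y)` of `T` on
`X × (ℝ/ℤ) × (ℝ/ℤ)`. -/
noncomputable def glasnerExt {X : Type*} (T : Equiv.Perm X) (φ : X → AddCircle (1 : ℝ)) :
    Equiv.Perm (X × (AddCircle (1 : ℝ) × AddCircle (1 : ℝ))) where
  toFun p := (T p.1, (p.2.1 + φ p.1, p.2.2 + p.2.1))
  invFun p := (T.symm p.1, (p.2.1 - φ (T.symm p.1), p.2.2 - (p.2.1 - φ (T.symm p.1))))
  left_inv := by rintro ⟨x, y, z⟩; simp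
  right_inv := by rintro ⟨x, y, z⟩; simp

/-- The image of `[0, 1/2)` in `ℝ/ℤ`. -/
noncomputable def halfArc : Set (AddCircle (1 : ℝ)) :=
  (fun t : ℝ => (t : AddCircle (1 : ℝ))) '' Set.Ico (0 : ℝ) (1 / 2)

/-- `F(x, y, z) = χ_{[0,1/2)}(z) − χ_{[1/2,1)}(z)`. -/
noncomputable def Fz {X : Type*} (p : X × (AddCircle (1 : ℝ) × AddCircle (1 : ℝ))) : ℝ :=
  halfArc.indicator (fun _ => (1 : ℝ)) p.2.2 - halfArcᶜ.indicator (fun _ => (1 : ℝ)) p.2.2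

/-!
The last coordinate of `T̄ⁿ(x, y, z)` is `z + n • y + b(x)` for some `b : X → ℝ/ℤ`, so by Fubini
it suffices to integrate `F(z + n • y + b(x)) F(z)` in `y` for fixed `x` and `z`. For `n ≠ 0` the
map `y ↦ F(c + n • y)` changes sign under the translation by `1/(2n)`, hence has integral zero.
-/

section Fubini

variable {α β E : Type*} [MeasurableSpace α] [MeasurableSpace β] {μ : Measure α} {ν : Measure β}
  [NormedAddCommGroup E] [NormedSpace ℝ E] [SFinite μ] [SFinite ν] {f : α × β → E}

theorem MeasureTheory.integral_prod_eq_zero (h : ∀ x, ∫ y, f (x, y) ∂ν = 0) :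
    ∫ z, f z ∂μ.prod ν = 0 := by
  by_cases hf : Integrable f (μ.prod ν)
  · simp [integral_prod f hf, h]
  · exact integral_undef hf

theorem MeasureTheory.integral_prod_eq_zero_symm (h : ∀ y, ∫ x, f (x, y) ∂μ = 0) :
    ∫ z, f z ∂μ.prod ν = 0 := by
  by_cases hf : Integrable f (μ.prod ν)
  · simp [integral_prod_symm f hf, h]
  · exact integral_undef hf

end Fubini

theorem Function.Antiperiodic.integral_eq_zero {G E : Type*} [AddGroup G] [MeasurableSpace G]
    [MeasurableAdd G] [NormedAddCommGroup E] [NormedSpace ℝ E] (μ : Measure G)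
    [μ.IsAddRightInvariant] {f : G → E} {t : G} (hf : Function.Antiperiodic f t) :
    ∫ x, f x ∂μ = 0 := by
  have h : ∫ x, f x ∂μ = -∫ x, f x ∂μ := calc
    ∫ x, f x ∂μ = ∫ x, f (x + t) ∂μ := (integral_add_right_eq_self f t).symm
    _ = ∫ x, -f x ∂μ := by congr with x; exact hf x
    _ = -∫ x, f x ∂μ := integral_neg f
  simpa [← two_smul ℝ] using eq_neg_iff_add_eq_zero.mp h

noncomputable def halfArcSign (w : AddCircle (1 : ℝ)) : ℝ :=
  halfArc.indicator (fun _ => (1 : ℝ)) w - halfArcᶜ.indicator (fun _ => (1 : ℝ)) w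

theorem coe_mem_halfArc_iff (s : ℝ) :
    (s : AddCircle (1 : ℝ)) ∈ halfArc ↔ Int.fract s < 1 / 2 := by
  constructor
  · rintro ⟨t, ⟨ht0, ht⟩, hts⟩
    have hfract : Int.fract s = t := by
      rw [← AddCircle.coe_eq_coe_iff_of_mem_Ico (p := (1 : ℝ)) (a := 0), AddCircle.coe_fract,
        ← hts]
      · exact ⟨Int.fract_nonneg s, by simpa using Int.fract_lt_one s⟩
      · exact ⟨ht0, by linarith⟩
    rwa [hfract]
  · intro hs
    exact ⟨Int.fract s, ⟨Int.fract_nonneg s, hs⟩, AddCircle.coe_fract s⟩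

theorem Int.fract_add_half_lt_half_iff (s : ℝ) :
    Int.fract (s + 1 / 2) < 1 / 2 ↔ ¬ Int.fract s < 1 / 2 := by
  have h0 := Int.fract_nonneg s
  have h1 := Int.fract_lt_one s
  by_cases hs : Int.fract s < 1 / 2
  · have : Int.fract (s + 1 / 2) = Int.fract s + 1 / 2 :=
      Int.fract_eq_iff.mpr ⟨by linarith, by linarith, ⌊s⌋, by rw [← Int.self_sub_fract]; ring⟩
    simp only [this, hs, not_true_eq_false, iff_false, not_lt]
    linarith
  · have : Int.fract (s + 1 / 2) = Int.fract s - 1 / 2 :=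
      Int.fract_eq_iff.mpr ⟨by linarith, by linarith, ⌊s⌋ + 1,
        by push_cast; rw [← Int.self_sub_fract]; ring⟩
    simp only [this, hs, not_false_eq_true, iff_true]
    linarith

theorem add_half_mem_halfArc_iff (w : AddCircle (1 : ℝ)) :
    w + ((1 / 2 : ℝ) : AddCircle (1 : ℝ)) ∈ halfArc ↔ w ∉ halfArc := by
  obtain ⟨s, rfl⟩ := QuotientAddGroup.mk_surjective w
  rw [← AddCircle.coe_add, coe_mem_halfArc_iff, Int.fract_add_half_lt_half_iff, coe_mem_halfArc_iff]

theorem halfArcSign_of_mem {w : AddCircle (1 : ℝ)} (hw : w ∈ halfArc) : halfArcSign w = 1 := by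
  simp [halfArcSign, hw]

theorem halfArcSign_of_notMem {w : AddCircle (1 : ℝ)} (hw : w ∉ halfArc) : halfArcSign w = -1 := by
  simp [halfArcSign, hw]

theorem halfArcSign_antiperiodic :
    Function.Antiperiodic halfArcSign ((1 / 2 : ℝ) : AddCircle (1 : ℝ)) := by
  intro w
  by_cases hw : w ∈ halfArc
  · rw [halfArcSign_of_mem hw,
      halfArcSign_of_notMem fun h => (add_half_mem_halfArc_iff w).mp h hw]
  · rw [halfArcSign_of_notMem hw, halfArcSign_of_mem ((add_half_mem_halfArc_iff w).mpr hw), neg_neg]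

theorem integral_halfArcSign_const_add_zsmul {n : ℤ} (hn : n ≠ 0) (c : AddCircle (1 : ℝ)) :
    ∫ y, halfArcSign (c + n • y) = 0 := by
  set t : AddCircle (1 : ℝ) := ((1 / (2 * n) : ℝ) : AddCircle (1 : ℝ))
  refine Function.Antiperiodic.integral_eq_zero volume (t := t) fun y => ?_
  have hhalf : n • t = ((1 / 2 : ℝ) : AddCircle (1 : ℝ)) := by
    rw [← AddCircle.coe_zsmul, zsmul_eq_mul]
    congr 1
    field_simp
  simp only [smul_add, hhalf, ← add_assoc, halfArcSign_antiperiodic _]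

theorem glasnerExt_zpow_snd {X : Type*} (T : Equiv.Perm X) (φ : X → AddCircle (1 : ℝ)) (n : ℤ) :
    ∃ a b : X → AddCircle (1 : ℝ), ∀ x y z,
      ((glasnerExt T φ ^ n) (x, (y, z))).2 = (y + a x, z + n • y + b x) := by
  induction n using Int.induction_on with
  | zero => exact ⟨0, 0, fun x y z => by simp⟩
  | succ k ih =>
    obtain ⟨a, b, hk⟩ := ih
    refine ⟨fun x => φ x + a (T x), fun x => (k : ℤ) • φ x + b (T x), fun x y z => ?_⟩
    rw [zpow_add_one, Equiv.Perm.mul_apply]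
    change ((glasnerExt T φ ^ (k : ℤ)) (T x, (y + φ x, z + y))).2 = _
    simp only [hk, Prod.mk.injEq, add_smul, one_smul, smul_add]
    constructor <;> abel
  | pred k ih =>
    obtain ⟨a, b, hk⟩ := ih
    refine ⟨fun x => a (T.symm x) - φ (T.symm x),
      fun x => ((k : ℤ) + 1) • φ (T.symm x) + b (T.symm x), fun x y z => ?_⟩
    rw [zpow_sub_one, Equiv.Perm.mul_apply]
    change ((glasnerExt T φ ^ (-(k : ℤ))) (T.symm x,
      (y - φ (T.symm x), z - (y - φ (T.symm x))))).2 = _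
    simp only [hk, Prod.mk.injEq, smul_sub, sub_smul, add_smul, one_smul, neg_smul]
    constructor <;> abel

theorem stmt13_general {X : Type*} [MeasurableSpace X] (μ : Measure X) [IsProbabilityMeasure μ]
    (T : Equiv.Perm X) (φ : X → AddCircle (1 : ℝ)) :
    ∀ n : ℤ, n ≠ 0 →
      ∫ p, Fz ((glasnerExt T φ ^ n) p) * Fz p
          ∂(μ.prod ((volume : Measure (AddCircle (1 : ℝ))).prod volume)) = 0 := by
  intro n hn
  obtain ⟨a, b, hpow⟩ := glasnerExt_zpow_snd T φ n
  refine integral_prod_eq_zero fun x => integral_prod_eq_zero_symm fun z => ?_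
  have hF : ∀ y, Fz ((glasnerExt T φ ^ n) (x, (y, z))) * Fz (x, (y, z))
      = halfArcSign (z + b x + n • y) * halfArcSign z := by
    intro y
    simp only [Fz, hpow, add_right_comm _ (n • y)]
    rfl
  simp only [hF, integral_mul_const, integral_halfArcSign_const_add_zsmul hn, zero_mul]

/-- For the extension `T̄(x, y, z) = (Tx, y + φ(x), z + y)` and
`F(x, y, z) = χ_{[0,1/2)}(z) − χ_{[1/2,1)}(z)` one has `∫ F∘T̄ⁿ · F = 0` for all `n ≠ 0`;
that is, the spectral measure of `F` is exactly Lebesgue measure on the circle. -/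
theorem stmt13 {X : Type*} [MeasurableSpace X] (μ : Measure X) [IsProbabilityMeasure μ]
    (T : Equiv.Perm X) (hT : MeasurePreserving T μ μ)
    (hTsymm : MeasurePreserving T.symm μ μ)
    (φ : X → AddCircle (1 : ℝ)) (hφ : Measurable φ) :
    ∀ n : ℤ, n ≠ 0 →
      ∫ p, Fz ((glasnerExt T φ ^ n) p) * Fz p
          ∂(μ.prod ((volume : Measure (AddCircle (1 : ℝ))).prod volume)) = 0 :=
  stmt13_general μ T φ
end
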